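/- arXiv:1401.1602 — 3 statements merged into one kernel-verified Lean document; each statement's English description precedes it below -/
import Mathlib

section
/- Let n ≥ 1, let A = (a_{i,j}) be a real n×n matrix, and let f be the piecewise constant function with matrix A on the uniform n×n grid. Then the supremum over all copula measures μ of ∫_{[0,1)²} f dμ equals (1/n) · max over all permutations π of {1,…,n} of ∑_{i=1}^n a_{i,π(i)}, and this supremum is attained (namely by the shuffle-of-M copula measure associated with a maximizing permutation π*). -/
open MeasureTheory Set

/-- A copula measure: a probability measure on the plane whose marginals are
Lebesgue measure restricted to `[0,1)`. -/
def IsCopulaMeasure (μ : Measure (ℝ × ℝ)) : Prop :=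
  IsProbabilityMeasure μ ∧
  μ.map Prod.fst = volume.restrict (Ico (0:ℝ) 1) ∧
  μ.map Prod.snd = volume.restrict (Ico (0:ℝ) 1)

/-- The half-open grid cell `[(i)/m, (i+1)/m) × [(j)/m, (j+1)/m)` (0-indexed). -/
def gridCell (m : ℕ) (i j : Fin m) : Set (ℝ × ℝ) :=
  Ico (((i : ℕ) : ℝ) / m) ((((i : ℕ) : ℝ) + 1) / m) ×ˢ
    Ico (((j : ℕ) : ℝ) / m) ((((j : ℕ) : ℝ) + 1) / m)

/-- The closure of the grid cell. -/
def closedCell (m : ℕ) (i j : Fin m) : Set (ℝ × ℝ) :=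
  Icc (((i : ℕ) : ℝ) / m) ((((i : ℕ) : ℝ) + 1) / m) ×ˢ
    Icc (((j : ℕ) : ℝ) / m) ((((j : ℕ) : ℝ) + 1) / m)

open Function

/-!
Since the marginals of a copula `μ` are uniform, the cell masses `μ(cell i j)` have all row and
column sums `1/n`, so `M i j = n * μ(cell i j)` is doubly stochastic and
`∫ f dμ = (1/n) ∑ M i j * a i j`. This is linear in `M`, and by Birkhoff's theorem `M` lies in the
convex hull of the permutation matrices, so it is at most its largest value at a permutation
matrix. The shuffle along a maximizing permutation `π` puts mass `1/n` on each cell `(i, π i)` and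
attains the bound.
-/

theorem sum_sum_permMatrix_mul {ι : Type*} [Fintype ι] [DecidableEq ι] (a : ι → ι → ℝ)
    (σ : Equiv.Perm ι) : ∑ i, ∑ j, σ.permMatrix ℝ i j * a i j = ∑ i, a i (σ i) := by
  simp [Equiv.Perm.permMatrix, PEquiv.toMatrix_apply]

theorem sum_sum_mul_le_iSup_of_mem_doublyStochastic {ι : Type*} [Fintype ι] [DecidableEq ι]
    (a : ι → ι → ℝ) {M : Matrix ι ι ℝ} (hM : M ∈ doublyStochastic ℝ ι) :
    ∑ i, ∑ j, M i j * a i j ≤ ⨆ σ : Equiv.Perm ι, ∑ i, a i (σ i) := by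
  let L : Matrix ι ι ℝ →ₗ[ℝ] ℝ := ∑ i, ∑ j, a i j • Matrix.entryLinearMap ℝ ℝ i j
  have hL : ∀ N : Matrix ι ι ℝ, L N = ∑ i, ∑ j, N i j * a i j := by
    simp [L, mul_comm]
  rw [← SetLike.mem_coe, doublyStochastic_eq_convexHull_permMatrix] at hM
  obtain ⟨_, ⟨σ, rfl⟩, hσ⟩ :=
    (L.convexOn convex_univ).exists_ge_of_mem_convexHull (subset_univ _) hM
  calc ∑ i, ∑ j, M i j * a i j = L M := (hL M).symm
    _ ≤ L (σ.permMatrix ℝ) := hσ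
    _ = ∑ i, a i (σ i) := by rw [hL, sum_sum_permMatrix_mul]
    _ ≤ _ := le_ciSup (f := fun σ : Equiv.Perm ι => ∑ i, a i (σ i)) (Finite.bddAbove_range _) σ

theorem integral_eq_sum_measureReal_smul {α ι E : Type*} [MeasurableSpace α] [Fintype ι]
    [NormedAddCommGroup E] [NormedSpace ℝ E] [CompleteSpace E] {μ : Measure α}
    [IsFiniteMeasure μ] {s : ι → Set α} (hs : ∀ i, MeasurableSet (s i))
    (hd : Pairwise (Disjoint on s)) (hcover : ∀ᵐ x ∂μ, x ∈ ⋃ i, s i) {f : α → E} {c : ι → E}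
    (hf : ∀ i, ∀ x ∈ s i, f x = c i) :
    ∫ x, f x ∂μ = ∑ i, μ.real (s i) • c i := by
  rw [integral_eq_setIntegral hcover, integral_iUnion_fintype hs hd]
  · exact Finset.sum_congr rfl fun i _ => by
      rw [setIntegral_congr_fun (hs i) (hf i), setIntegral_const]
  · exact fun i => (integrableOn_const (measure_ne_top μ _)).congr_fun
      (fun x hx => (hf i x hx).symm) (hs i)

def gridIco (n : ℕ) (i : Fin n) : Set ℝ := Ico (((i : ℕ) : ℝ) / n) ((((i : ℕ) : ℝ) + 1) / n)

section Grid

variable {n : ℕ}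

theorem gridCell_eq_prod (i j : Fin n) : gridCell n i j = gridIco n i ×ˢ gridIco n j := rfl

theorem measurableSet_gridIco (i : Fin n) : MeasurableSet (gridIco n i) := measurableSet_Ico

theorem measurableSet_gridCell (i j : Fin n) : MeasurableSet (gridCell n i j) :=
  (measurableSet_gridIco i).prod (measurableSet_gridIco j)

theorem pairwise_disjoint_gridIco : Pairwise (Disjoint on gridIco n) := by
  intro i j hij
  wlog h : i < j generalizing i j
  · exact (this hij.symm (hij.lt_or_gt.resolve_left h)).symm
  have hij' : ((i : ℕ) : ℝ) + 1 ≤ (j : ℕ) := by exact_mod_cast h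
  have hle : (((i : ℕ) : ℝ) + 1) / n ≤ ((j : ℕ) : ℝ) / n :=
    div_le_div_of_nonneg_right hij' n.cast_nonneg
  exact disjoint_left.2 fun x hi hj => (hi.2.trans_le hle).not_ge hj.1

theorem pairwise_disjoint_gridCell :
    Pairwise (Disjoint on fun q : Fin n × Fin n => gridCell n q.1 q.2) := by
  rintro ⟨i, j⟩ ⟨i', j'⟩ hne
  rcases eq_or_ne i i' with rfl | hi
  · exact disjoint_prod.2 (Or.inr (pairwise_disjoint_gridIco fun hj => hne (Prod.ext rfl hj)))
  · exact disjoint_prod.2 (Or.inl (pairwise_disjoint_gridIco hi))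

theorem gridIco_subset_Ico (i : Fin n) : gridIco n i ⊆ Ico 0 1 := by
  have hn : (0 : ℝ) < n := by exact_mod_cast i.pos
  rintro x ⟨h0, h1⟩
  refine ⟨le_trans (by positivity) h0, h1.trans_le ?_⟩
  rw [div_le_one hn]
  exact_mod_cast i.isLt

theorem iUnion_gridIco (hn : n ≠ 0) : ⋃ i, gridIco n i = Ico 0 1 := by
  refine (iUnion_subset gridIco_subset_Ico).antisymm fun x ⟨h0, h1⟩ => ?_
  have hn' : (0 : ℝ) < n := by positivity
  have hnx : 0 ≤ (n : ℝ) * x := by positivity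
  have hk : ⌊(n : ℝ) * x⌋₊ < n := (Nat.floor_lt hnx).2 (by nlinarith)
  refine mem_iUnion.2 ⟨⟨_, hk⟩, ?_, ?_⟩
  · show (⌊(n : ℝ) * x⌋₊ : ℝ) / n ≤ x
    rw [div_le_iff₀ hn', mul_comm x]
    exact Nat.floor_le hnx
  · show x < ((⌊(n : ℝ) * x⌋₊ : ℝ) + 1) / n
    rw [lt_div_iff₀ hn', mul_comm x]
    exact Nat.lt_floor_add_one _

theorem iUnion_gridCell (hn : n ≠ 0) :
    ⋃ q : Fin n × Fin n, gridCell n q.1 q.2 = Ico 0 1 ×ˢ Ico 0 1 := by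
  simp only [gridCell_eq_prod, iUnion_prod, iUnion_gridIco hn]

theorem volume_real_gridIco (i : Fin n) : volume.real (gridIco n i) = 1 / n := by
  rw [gridIco, Real.volume_real_Ico_of_le (by gcongr; linarith)]
  ring

end Grid

namespace IsCopulaMeasure

variable {μ : Measure (ℝ × ℝ)} (hμ : IsCopulaMeasure μ) {n : ℕ}
include hμ

theorem map_swap : IsCopulaMeasure (μ.map Prod.swap) := by
  have := hμ.1
  refine ⟨Measure.isProbabilityMeasure_map measurable_swap.aemeasurable, ?_, ?_⟩
  · rw [Measure.map_map measurable_fst measurable_swap]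
    exact hμ.2.2
  · rw [Measure.map_map measurable_snd measurable_swap]
    exact hμ.2.1

theorem ae_fst_mem : ∀ᵐ p ∂μ, p.1 ∈ Ico (0 : ℝ) 1 :=
  ae_of_ae_map measurable_fst.aemeasurable (by rw [hμ.2.1]; exact ae_restrict_mem measurableSet_Ico)

theorem ae_snd_mem : ∀ᵐ p ∂μ, p.2 ∈ Ico (0 : ℝ) 1 :=
  ae_of_ae_map measurable_snd.aemeasurable (by rw [hμ.2.2]; exact ae_restrict_mem measurableSet_Ico)

theorem measureReal_preimage_fst_gridIco (i : Fin n) :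
    μ.real (Prod.fst ⁻¹' gridIco n i) = 1 / n := by
  rw [← map_measureReal_apply measurable_fst (measurableSet_gridIco i), hμ.2.1,
    measureReal_restrict_apply (measurableSet_gridIco i),
    inter_eq_self_of_subset_left (gridIco_subset_Ico i), volume_real_gridIco]

theorem sum_measureReal_gridCell_right (i : Fin n) :
    ∑ j, μ.real (gridCell n i j) = 1 / n := by
  have := hμ.1
  have hrow : ⋃ j, gridCell n i j = gridIco n i ×ˢ Ico 0 1 := by
    simp only [gridCell_eq_prod, ← prod_iUnion, iUnion_gridIco i.pos.ne']
  have hsum := measureReal_iUnion_fintype (μ := μ) (f := gridCell n i)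
    (fun j k hjk => disjoint_prod.2 (Or.inr (pairwise_disjoint_gridIco hjk)))
    (measurableSet_gridCell i)
  rw [← hsum, hrow, prod_eq, measureReal_def,
    measure_inter_conull (t := Prod.snd ⁻¹' Ico 0 1) (ae_iff.1 hμ.ae_snd_mem), ← measureReal_def,
    hμ.measureReal_preimage_fst_gridIco]

theorem sum_measureReal_gridCell_left (j : Fin n) :
    ∑ i, μ.real (gridCell n i j) = 1 / n := by
  rw [← hμ.map_swap.sum_measureReal_gridCell_right j]
  refine Finset.sum_congr rfl fun i _ => ?_
  rw [map_measureReal_apply measurable_swap (measurableSet_gridCell j i)]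
  simp only [gridCell_eq_prod, preimage_swap_prod]

theorem cellMatrix_mem_doublyStochastic :
    Matrix.of (fun i j : Fin n => n * μ.real (gridCell n i j)) ∈ doublyStochastic ℝ (Fin n) := by
  refine mem_doublyStochastic_iff_sum.2
    ⟨fun i j => mul_nonneg n.cast_nonneg measureReal_nonneg, fun i => ?_, fun j => ?_⟩
  · have hn : (n : ℝ) ≠ 0 := by exact_mod_cast i.pos.ne'
    simp only [Matrix.of_apply, ← Finset.mul_sum, hμ.sum_measureReal_gridCell_right]
    field_simp
  · have hn : (n : ℝ) ≠ 0 := by exact_mod_cast j.pos.ne'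
    simp only [Matrix.of_apply, ← Finset.mul_sum, hμ.sum_measureReal_gridCell_left]
    field_simp

theorem integral_eq_sum (hn : n ≠ 0) {a : Fin n → Fin n → ℝ} {f : ℝ × ℝ → ℝ}
    (hf : ∀ i j : Fin n, ∀ p ∈ gridCell n i j, f p = a i j) :
    ∫ p, f p ∂μ = ∑ i, ∑ j, μ.real (gridCell n i j) * a i j := by
  have := hμ.1
  have hcover : ∀ᵐ p ∂μ, p ∈ ⋃ q : Fin n × Fin n, gridCell n q.1 q.2 := by
    rw [iUnion_gridCell hn]
    exact hμ.ae_fst_mem.and hμ.ae_snd_mem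
  have hsum := integral_eq_sum_measureReal_smul (μ := μ)
    (s := fun q : Fin n × Fin n => gridCell n q.1 q.2) (c := fun q => a q.1 q.2)
    (fun q => measurableSet_gridCell q.1 q.2) pairwise_disjoint_gridCell hcover
    (fun q => hf q.1 q.2)
  rw [hsum, Fintype.sum_prod_type]
  simp only [smul_eq_mul]

theorem integral_le (hn : n ≠ 0) {a : Fin n → Fin n → ℝ} {f : ℝ × ℝ → ℝ}
    (hf : ∀ i j : Fin n, ∀ p ∈ gridCell n i j, f p = a i j) :
    ∫ p, f p ∂μ ≤ (1 / n : ℝ) * ⨆ π : Equiv.Perm (Fin n), ∑ i, a i (π i) := by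
  have hn' : (n : ℝ) ≠ 0 := by exact_mod_cast hn
  calc ∫ p, f p ∂μ = (1 / n : ℝ) * ∑ i, ∑ j, (n * μ.real (gridCell n i j)) * a i j := by
        simp only [hμ.integral_eq_sum hn hf, Finset.mul_sum]
        field_simp
    _ ≤ _ := by
        gcongr
        exact sum_sum_mul_le_iSup_of_mem_doublyStochastic a hμ.cellMatrix_mem_doublyStochastic

end IsCopulaMeasure

theorem map_add_const_volume_restrict_Ico (a b c : ℝ) :
    (volume.restrict (Ico a b)).map (· + c) = volume.restrict (Ico (a + c) (b + c)) := by
  have hpre : (· + c) ⁻¹' Ico (a + c) (b + c) = Ico a b := by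
    rw [preimage_add_const_Ico, add_sub_cancel_right, add_sub_cancel_right]
  rw [← hpre, ← Measure.restrict_map (measurable_add_const c) measurableSet_Ico,
    map_add_right_eq_self]

noncomputable def shuffleMap (n : ℕ) (π : Equiv.Perm (Fin n)) (x : ℝ) : ℝ :=
  x + ∑ i, (gridIco n i).indicator (fun _ => (((π i : ℕ) : ℝ) - (i : ℕ)) / n) x

noncomputable def shuffleMeasure (n : ℕ) (π : Equiv.Perm (Fin n)) : Measure (ℝ × ℝ) :=
  (volume.restrict (Ico (0 : ℝ) 1)).map fun x => (x, shuffleMap n π x)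

section Shuffle

variable {n : ℕ} (π : Equiv.Perm (Fin n))

theorem measurable_shuffleMap : Measurable (shuffleMap n π) :=
  measurable_id.add <| Finset.measurable_sum _ fun i _ =>
    measurable_const.indicator (measurableSet_gridIco i)

theorem measurable_graph_shuffleMap : Measurable fun x => (x, shuffleMap n π x) :=
  measurable_id.prodMk (measurable_shuffleMap π)

theorem shuffleMap_of_mem {i : Fin n} {x : ℝ} (hx : x ∈ gridIco n i) :
    shuffleMap n π x = x + (((π i : ℕ) : ℝ) - (i : ℕ)) / n := by
  rw [shuffleMap, Finset.sum_eq_single_of_mem i (Finset.mem_univ _) fun j _ hji =>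
    indicator_of_notMem ((pairwise_disjoint_gridIco hji).notMem_of_mem_right hx) _,
    indicator_of_mem hx]

theorem shuffleMap_mem {i : Fin n} {x : ℝ} (hx : x ∈ gridIco n i) :
    shuffleMap n π x ∈ gridIco n (π i) := by
  rw [shuffleMap_of_mem π hx]
  obtain ⟨h0, h1⟩ := hx
  constructor
  · calc ((π i : ℕ) : ℝ) / n = (i : ℕ) / n + (((π i : ℕ) : ℝ) - (i : ℕ)) / n := by ring
      _ ≤ _ := by gcongr
  · calc x + (((π i : ℕ) : ℝ) - (i : ℕ)) / n
        < ((i : ℕ) + 1) / n + (((π i : ℕ) : ℝ) - (i : ℕ)) / n := by gcongr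
      _ = (((π i : ℕ) : ℝ) + 1) / n := by ring

theorem map_shuffleMap_restrict_gridIco (i : Fin n) :
    (volume.restrict (gridIco n i)).map (shuffleMap n π) = volume.restrict (gridIco n (π i)) := by
  have hae : shuffleMap n π =ᵐ[volume.restrict (gridIco n i)]
      (· + (((π i : ℕ) : ℝ) - (i : ℕ)) / n) :=
    (ae_restrict_iff' (measurableSet_gridIco i)).2 (.of_forall fun x hx => shuffleMap_of_mem π hx)
  rw [Measure.map_congr hae, gridIco, map_add_const_volume_restrict_Ico, gridIco]
  congr 2 <;> ring

theorem map_shuffleMap_restrict_Ico (hn : n ≠ 0) :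
    (volume.restrict (Ico (0 : ℝ) 1)).map (shuffleMap n π) = volume.restrict (Ico 0 1) := by
  rw [← iUnion_gridIco hn, Measure.restrict_iUnion pairwise_disjoint_gridIco measurableSet_gridIco,
    Measure.map_sum (measurable_shuffleMap π).aemeasurable]
  simp only [map_shuffleMap_restrict_gridIco]
  exact Measure.sum_comp_equiv π fun i => volume.restrict (gridIco n i)

theorem isCopulaMeasure_shuffleMeasure (hn : n ≠ 0) : IsCopulaMeasure (shuffleMeasure n π) := by
  have hgraph := measurable_graph_shuffleMap π
  have : IsProbabilityMeasure (volume.restrict (Ico (0 : ℝ) 1)) := ⟨by simp⟩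
  refine ⟨Measure.isProbabilityMeasure_map hgraph.aemeasurable, ?_, ?_⟩
  · rw [shuffleMeasure, Measure.map_map measurable_fst hgraph]
    exact Measure.map_id
  · rw [shuffleMeasure, Measure.map_map measurable_snd hgraph]
    exact map_shuffleMap_restrict_Ico π hn

theorem measureReal_shuffleMeasure_gridCell (i j : Fin n) :
    (shuffleMeasure n π).real (gridCell n i j) = if π i = j then (1 / n : ℝ) else 0 := by
  have hgraph := measurable_graph_shuffleMap π
  have hpre : (fun x => (x, shuffleMap n π x)) ⁻¹' gridCell n i j ∩ Ico 0 1 =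
      gridIco n i ∩ shuffleMap n π ⁻¹' gridIco n j := by
    rw [inter_comm, gridCell_eq_prod, mk_preimage_prod, preimage_id', ← inter_assoc,
      inter_eq_self_of_subset_right (gridIco_subset_Ico i)]
  rw [shuffleMeasure, map_measureReal_apply hgraph (measurableSet_gridCell i j),
    measureReal_restrict_apply (measurableSet_gridCell i j |>.preimage hgraph), hpre]
  split_ifs with h
  · subst h
    have hsub : gridIco n i ⊆ shuffleMap n π ⁻¹' gridIco n (π i) := fun x hx => shuffleMap_mem π hx
    rw [inter_eq_self_of_subset_left hsub, volume_real_gridIco]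
  · have hdisj : Disjoint (gridIco n i) (shuffleMap n π ⁻¹' gridIco n j) := disjoint_left.2
      fun x hx hx' => (pairwise_disjoint_gridIco h).notMem_of_mem_right hx' (shuffleMap_mem π hx)
    rw [disjoint_iff_inter_eq_empty.1 hdisj, measureReal_empty]

theorem integral_shuffleMeasure (hn : n ≠ 0) {a : Fin n → Fin n → ℝ} {f : ℝ × ℝ → ℝ}
    (hf : ∀ i j : Fin n, ∀ p ∈ gridCell n i j, f p = a i j) :
    ∫ p, f p ∂shuffleMeasure n π = (1 / n : ℝ) * ∑ i, a i (π i) := by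
  simp [(isCopulaMeasure_shuffleMeasure π hn).integral_eq_sum hn hf,
    measureReal_shuffleMeasure_gridCell, Finset.mul_sum]

end Shuffle

theorem stmt_2 (n : ℕ) (hn : 1 ≤ n) (a : Fin n → Fin n → ℝ) (f : ℝ × ℝ → ℝ)
    (hf : ∀ i j : Fin n, ∀ p ∈ gridCell n i j, f p = a i j) :
    IsGreatest {x : ℝ | ∃ μ : Measure (ℝ × ℝ), IsCopulaMeasure μ ∧ x = ∫ p, f p ∂μ}
      ((1 / n : ℝ) * ⨆ π : Equiv.Perm (Fin n), ∑ i, a i (π i)) ∧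
    ∃ (π' : Equiv.Perm (Fin n)) (T : ℝ → ℝ), Measurable T ∧
      (∀ i : Fin n, ∀ x ∈ Ico (((i : ℕ) : ℝ) / n) ((((i : ℕ) : ℝ) + 1) / n),
        T x = x + (((π' i : ℕ) : ℝ) - ((i : ℕ) : ℝ)) / n) ∧
      (∑ i, a i (π' i) = ⨆ π : Equiv.Perm (Fin n), ∑ i, a i (π i)) ∧
      ∫ p, f p ∂((volume.restrict (Ico (0:ℝ) 1)).map (fun x => (x, T x))) =
        (1 / n : ℝ) * ⨆ π : Equiv.Perm (Fin n), ∑ i, a i (π i) := by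
  have hn0 : n ≠ 0 := by omega
  obtain ⟨π', hπ'⟩ := Finite.exists_max fun π : Equiv.Perm (Fin n) => ∑ i, a i (π i)
  have hmax : ∑ i, a i (π' i) = ⨆ π : Equiv.Perm (Fin n), ∑ i, a i (π i) :=
    le_antisymm (le_ciSup (f := fun π : Equiv.Perm (Fin n) => ∑ i, a i (π i))
      (Finite.bddAbove_range _) π') (ciSup_le hπ')
  have hattained : ∫ p, f p ∂shuffleMeasure n π' =
      (1 / n : ℝ) * ⨆ π : Equiv.Perm (Fin n), ∑ i, a i (π i) := by
    rw [integral_shuffleMeasure π' hn0 hf, hmax]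
  refine ⟨⟨⟨shuffleMeasure n π', isCopulaMeasure_shuffleMeasure π' hn0, hattained.symm⟩, ?_⟩,
    π', shuffleMap n π', measurable_shuffleMap π', fun i x hx => shuffleMap_of_mem π' hx, hmax,
    hattained⟩
  rintro _ ⟨μ, hμ, rfl⟩
  exact hμ.integral_le hn0 hf
end

section
/- Let n ≥ 1, let A = (a_{i,j}) be a real n×n matrix, and let D = (d_{i,j}) be a doubly stochastic n×n matrix (nonnegative entries, all row and column sums equal to 1). Then ∑_{i=1}^n ∑_{j=1}^n a_{i,j} d_{i,j} ≤ max over all permutations π of {1,…,n} of ∑_{i=1}^n a_{i,π(i)}. -/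
/-! By Birkhoff's theorem the doubly stochastic matrices are the convex hull of the permutation
matrices, so the linear functional `M ↦ ∑ i j, a i j * M i j` attains its maximum over them at a
permutation matrix `P_σ`, where it equals `∑ i, a i (σ i)`. -/

open MeasureTheory Set

theorem sum_sum_mul_permMatrix {R n : Type*} [NonAssocSemiring R] [Fintype n] [DecidableEq n]
    (a : Matrix n n R) (σ : Equiv.Perm n) :
    ∑ i, ∑ j, a i j * σ.permMatrix R i j = ∑ i, a i (σ i) := by
  simp [Equiv.toPEquiv_apply, PEquiv.toMatrix_apply]

theorem exists_perm_sum_sum_mul_le_of_mem_doublyStochastic {R n : Type*} [Field R] [LinearOrder R]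
    [IsStrictOrderedRing R] [Fintype n] [DecidableEq n] (a : Matrix n n R) {M : Matrix n n R}
    (hM : M ∈ doublyStochastic R n) :
    ∃ σ : Equiv.Perm n, ∑ i, ∑ j, a i j * M i j ≤ ∑ i, a i (σ i) := by
  let f : Matrix n n R →ₗ[R] R :=
    { toFun := fun M ↦ ∑ i, ∑ j, a i j * M i j
      map_add' := by simp [mul_add, Finset.sum_add_distrib]
      map_smul' := by simp [Finset.mul_sum, mul_left_comm] }
  rw [← SetLike.mem_coe, doublyStochastic_eq_convexHull_permMatrix] at hM
  obtain ⟨_, ⟨σ, rfl⟩, hσ⟩ :=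
    (f.convexOn convex_univ).exists_ge_of_mem_convexHull (subset_univ _) hM
  exact ⟨σ, hσ.trans_eq (sum_sum_mul_permMatrix a σ)⟩

theorem stmt_6_general (n : ℕ) (a d : Fin n → Fin n → ℝ)
    (hd0 : ∀ i j, 0 ≤ d i j) (hrow : ∀ i, ∑ j, d i j = 1) (hcol : ∀ j, ∑ i, d i j = 1) :
    ∑ i, ∑ j, a i j * d i j ≤ ⨆ π : Equiv.Perm (Fin n), ∑ i, a i (π i) := by
  have hd : Matrix.of d ∈ doublyStochastic ℝ (Fin n) :=
    mem_doublyStochastic_iff_sum.2 ⟨hd0, hrow, hcol⟩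
  obtain ⟨σ, hσ⟩ := exists_perm_sum_sum_mul_le_of_mem_doublyStochastic a hd
  exact le_ciSup_of_le (Set.finite_range _).bddAbove σ hσ

theorem stmt_6 (n : ℕ) (hn : 1 ≤ n) (a d : Fin n → Fin n → ℝ)
    (hd0 : ∀ i j, 0 ≤ d i j) (hrow : ∀ i, ∑ j, d i j = 1) (hcol : ∀ j, ∑ i, d i j = 1) :
    ∑ i, ∑ j, a i j * d i j ≤ ⨆ π : Equiv.Perm (Fin n), ∑ i, a i (π i) :=
  stmt_6_general n a d hd0 hrow hcol
end

section
/- Let 0 = s_0 < s_1 < … < s_n = 1 and 0 = t_0 < t_1 < … < t_m = 1 be rational numbers, and let f : [0,1)² → ℝ be constant on each rectangle [s_i, s_{i+1}) × [t_j, t_{j+1}), i = 0,…,n−1, j = 0,…,m−1. Then the supremum over all copula measures μ of ∫_{[0,1)²} f dμ is attained, i.e., there exists a copula measure μ* with ∫_{[0,1)²} f dμ* = sup over copula measures μ of ∫_{[0,1)²} f dμ. -/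
/-!
The masses that a copula measure gives to the cells `I i ×ˢ J j` form a point of the
transportation polytope whose row and column sums are the lengths of the `I i` and `J j`, and
the integral of the step function `f` is a linear function of these masses. Conversely every
point of the polytope is the vector of cell masses of a checkerboard copula, which spreads the
prescribed mass uniformly over each cell. Hence the supremum is the maximum of a linear
function on a compact polytope, and it is attained.
-/

open MeasureTheory Set

open Function ProbabilityTheory
open scoped ENNReal

structure IsMeasurablePartition {α ι : Type*} [MeasurableSpace α] (I : ι → Set α) (S : Set α) :
    Prop where
  measurableSet : ∀ i, MeasurableSet (I i)
  pairwise_disjoint : Pairwise (Disjoint on I)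
  iUnion_eq : ⋃ i, I i = S

namespace IsMeasurablePartition

variable {α β ι κ : Type*} [MeasurableSpace α] [MeasurableSpace β] {I : ι → Set α}
  {J : κ → Set β} {S : Set α} {T : Set β}

lemma subset (hI : IsMeasurablePartition I S) (i : ι) : I i ⊆ S :=
  hI.iUnion_eq ▸ subset_iUnion I i

lemma measure_ne_top (hI : IsMeasurablePartition I S) {μ : Measure α} (hS : μ S ≠ ∞) (i : ι) :
    μ (I i) ≠ ∞ :=
  measure_ne_top_of_subset (hI.subset i) hS

lemma prod (hI : IsMeasurablePartition I S) (hJ : IsMeasurablePartition J T) :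
    IsMeasurablePartition (fun p : ι × κ => I p.1 ×ˢ J p.2) (S ×ˢ T) where
  measurableSet p := (hI.measurableSet p.1).prod (hJ.measurableSet p.2)
  pairwise_disjoint p q hpq := by
    by_cases h : p.1 = q.1
    · exact (hJ.pairwise_disjoint fun h' => hpq (Prod.ext h h')).set_prod_right _ _
    · exact (hI.pairwise_disjoint h).set_prod_left _ _
  iUnion_eq := by rw [iUnion_prod, hI.iUnion_eq, hJ.iUnion_eq]

lemma sum_restrict [Fintype ι] (hI : IsMeasurablePartition I S) (μ : Measure α) :
    ∑ i, μ.restrict (I i) = μ.restrict S := by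
  rw [← hI.iUnion_eq, Measure.restrict_iUnion hI.pairwise_disjoint hI.measurableSet,
    Measure.sum_fintype]

lemma cond_apply [DecidableEq ι] (hI : IsMeasurablePartition I S) {μ : Measure α} {i : ι}
    (hi₀ : μ (I i) ≠ 0) (hi : μ (I i) ≠ ∞) (k : ι) : μ[I k | I i] = if i = k then 1 else 0 := by
  split_ifs with h
  · exact h ▸ cond_apply_self hi₀ hi
  · rw [ProbabilityTheory.cond_apply (hI.measurableSet i), (hI.pairwise_disjoint h).inter_eq,
      measure_empty, mul_zero]

end IsMeasurablePartition

lemma isMeasurablePartition_Ico {n : ℕ} {s : ℕ → ℝ} (hs : ∀ i < n, s i < s (i + 1)) :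
    IsMeasurablePartition (fun i : Fin n => Ico (s i) (s (i + 1))) (Ico (s 0) (s n)) := by
  have hmono : MonotoneOn s (Iic n) :=
    (strictMonoOn_Iic_of_lt_succ fun i hi => hs i hi).monotoneOn
  refine ⟨fun _ => measurableSet_Ico, (pairwise_disjoint_on _).2 fun i j hij => ?_, ?_⟩
  · exact (Iio_disjoint_Ici (hmono (Nat.succ_le_of_lt i.isLt) j.isLt.le hij)).mono
      Ico_subset_Iio_self Ico_subset_Ici_self
  · refine (iUnion_subset fun i : Fin n => Ico_subset_Ico
      (hmono (Nat.zero_le n) i.isLt.le (Nat.zero_le i))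
      (hmono (Nat.succ_le_of_lt i.isLt) (le_refl n) (Nat.succ_le_of_lt i.isLt))).antisymm
      fun x hx => ?_
    obtain ⟨i, hi, hxi⟩ := mem_iUnion₂.1 (Ico_subset_biUnion_Ico n s hx)
    exact mem_iUnion.2 ⟨⟨i, Finset.mem_range.1 hi⟩, hxi⟩

lemma ProbabilityTheory.measure_smul_cond {α : Type*} [MeasurableSpace α] {μ : Measure α}
    {s : Set α} (hs : μ s ≠ ∞) : μ s • μ[|s] = μ.restrict s := by
  by_cases h₀ : μ s = 0
  · simp [h₀, Measure.restrict_eq_zero.2 h₀]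
  · rw [cond, smul_smul, ENNReal.mul_inv_cancel h₀ hs, one_smul]

lemma MeasureTheory.Measure.map_fst_sum_smul_prod {ι κ X Y : Type*} [Fintype ι] [Fintype κ]
    [MeasurableSpace X] [MeasurableSpace Y] (w : ι × κ → ℝ≥0∞) (α : ι → Measure X)
    (β : κ → Measure Y) [∀ j, IsProbabilityMeasure (β j)] :
    (∑ p, w p • (α p.1).prod (β p.2)).map Prod.fst = ∑ i, (∑ j, w (i, j)) • α i := by
  rw [Measure.map_finset_sum' measurable_fst.aemeasurable]
  simp [Measure.map_smul, Fintype.sum_prod_type, Finset.sum_smul]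

lemma MeasureTheory.Measure.map_snd_sum_smul_prod {ι κ X Y : Type*} [Fintype ι] [Fintype κ]
    [MeasurableSpace X] [MeasurableSpace Y] (w : ι × κ → ℝ≥0∞) (α : ι → Measure X)
    (β : κ → Measure Y) [∀ i, IsProbabilityMeasure (α i)] [∀ j, SFinite (β j)] :
    (∑ p, w p • (α p.1).prod (β p.2)).map Prod.snd = ∑ j, (∑ i, w (i, j)) • β j := by
  rw [Measure.map_finset_sum' measurable_snd.aemeasurable]
  simp [Measure.map_smul, Fintype.sum_prod_type_right, Finset.sum_smul]

def transportPolytope {ι κ : Type*} [Fintype ι] [Fintype κ] (a : ι → ℝ) (b : κ → ℝ) :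
    Set (ι × κ → ℝ) :=
  {c | (∀ p, 0 ≤ c p) ∧ (∀ i, ∑ j, c (i, j) = a i) ∧ ∀ j, ∑ i, c (i, j) = b j}

lemma isCompact_transportPolytope {ι κ : Type*} [Fintype ι] [Fintype κ] (a : ι → ℝ)
    (b : κ → ℝ) : IsCompact (transportPolytope a b) := by
  have hclosed : IsClosed (transportPolytope a b) := by
    simp only [transportPolytope, ofPred_and, ofPred_forall]
    refine (isClosed_iInter fun p => isClosed_le continuous_const (continuous_apply p)).inter
      ((isClosed_iInter fun i => isClosed_eq (by fun_prop) continuous_const).inter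
        (isClosed_iInter fun j => isClosed_eq (by fun_prop) continuous_const))
  refine (isCompact_Icc (a := 0) (b := fun p => a p.1)).of_isClosed_subset hclosed
    fun c hc => ⟨hc.1, fun p => ?_⟩
  calc c p ≤ ∑ j, c (p.1, j) :=
        Finset.single_le_sum (f := fun j => c (p.1, j)) (fun j _ => hc.1 _) (Finset.mem_univ p.2)
    _ = a p.1 := hc.2.1 p.1

lemma isCopulaMeasure_of_map (μ : Measure (ℝ × ℝ))
    (hfst : μ.map Prod.fst = volume.restrict (Ico (0:ℝ) 1))
    (hsnd : μ.map Prod.snd = volume.restrict (Ico (0:ℝ) 1)) : IsCopulaMeasure μ := by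
  refine ⟨⟨?_⟩, hfst, hsnd⟩
  rw [← preimage_univ (f := Prod.fst), ← Measure.map_apply measurable_fst MeasurableSet.univ,
    hfst]
  simp

lemma isCopulaMeasure_volume_prod :
    IsCopulaMeasure ((volume.restrict (Ico (0:ℝ) 1)).prod (volume.restrict (Ico (0:ℝ) 1))) := by
  have : IsProbabilityMeasure (volume.restrict (Ico (0:ℝ) 1)) := ⟨by simp⟩
  exact isCopulaMeasure_of_map _ (by simp) (by simp)

namespace IsCopulaMeasure

variable {ι κ : Type*} [Fintype ι] [Fintype κ] {I : ι → Set ℝ} {J : κ → Set ℝ}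
  {μ : Measure (ℝ × ℝ)}

lemma measure_prod_Ico (hμ : IsCopulaMeasure μ) {A : Set ℝ} (hA : MeasurableSet A) :
    μ (A ×ˢ Ico 0 1) = volume (A ∩ Ico 0 1) := by
  have := hμ.1
  have hconull : μ (Prod.snd ⁻¹' Ico (0:ℝ) 1)ᶜ = 0 := by
    rw [prob_compl_eq_zero_iff (measurable_snd measurableSet_Ico),
      ← Measure.map_apply measurable_snd measurableSet_Ico, hμ.2.2]
    simp
  rw [prod_eq, measure_inter_conull hconull, ← Measure.map_apply measurable_fst hA, hμ.2.1,
    Measure.restrict_apply hA]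

lemma measure_Ico_prod (hμ : IsCopulaMeasure μ) {B : Set ℝ} (hB : MeasurableSet B) :
    μ (Ico 0 1 ×ˢ B) = volume (B ∩ Ico 0 1) := by
  have := hμ.1
  have hconull : μ (Prod.fst ⁻¹' Ico (0:ℝ) 1)ᶜ = 0 := by
    rw [prob_compl_eq_zero_iff (measurable_fst measurableSet_Ico),
      ← Measure.map_apply measurable_fst measurableSet_Ico, hμ.2.1]
    simp
  rw [prod_eq, inter_comm, measure_inter_conull hconull, ← Measure.map_apply measurable_snd hB,
    hμ.2.2, Measure.restrict_apply hB]

lemma ae_mem_unitSquare (hμ : IsCopulaMeasure μ) :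
    ∀ᵐ x ∂μ, x ∈ Ico (0:ℝ) 1 ×ˢ Ico (0:ℝ) 1 := by
  have := hμ.1
  rw [ae_mem_iff_measure_eq (measurableSet_Ico.prod measurableSet_Ico).nullMeasurableSet,
    hμ.measure_prod_Ico measurableSet_Ico]
  simp

lemma cellMass_mem_transportPolytope (hμ : IsCopulaMeasure μ)
    (hI : IsMeasurablePartition I (Ico 0 1)) (hJ : IsMeasurablePartition J (Ico 0 1)) :
    (fun p => μ.real (I p.1 ×ˢ J p.2)) ∈
      transportPolytope (fun i => volume.real (I i)) (fun j => volume.real (J j)) := by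
  have := hμ.1
  refine ⟨fun p => measureReal_nonneg, fun i => ?_, fun j => ?_⟩
  · rw [← measureReal_iUnion_fintype (f := fun j => I i ×ˢ J j)
        (hJ.pairwise_disjoint.mono fun _ _ h => h.set_prod_right _ _)
        fun j => (hI.measurableSet i).prod (hJ.measurableSet j),
      ← prod_iUnion, hJ.iUnion_eq, measureReal_def, hμ.measure_prod_Ico (hI.measurableSet i),
      inter_eq_self_of_subset_left (hI.subset i)]
    rfl
  · rw [← measureReal_iUnion_fintype (f := fun i => I i ×ˢ J j)
        (hI.pairwise_disjoint.mono fun _ _ h => h.set_prod_left _ _)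
        fun i => (hI.measurableSet i).prod (hJ.measurableSet j),
      ← iUnion_prod_const, hI.iUnion_eq, measureReal_def,
      hμ.measure_Ico_prod (hJ.measurableSet j),
      inter_eq_self_of_subset_left (hJ.subset j)]
    rfl

lemma integral_eq_sum_s16 (hμ : IsCopulaMeasure μ) (hI : IsMeasurablePartition I (Ico 0 1))
    (hJ : IsMeasurablePartition J (Ico 0 1)) {f : ℝ × ℝ → ℝ} {v : ι × κ → ℝ}
    (hf : ∀ p, ∀ x ∈ I p.1 ×ˢ J p.2, f x = v p) :
    ∫ x, f x ∂μ = ∑ p, μ.real (I p.1 ×ˢ J p.2) * v p := by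
  have := hμ.1
  have hIJ := hI.prod hJ
  rw [integral_eq_setIntegral hμ.ae_mem_unitSquare, ← hIJ.iUnion_eq,
    integral_iUnion_fintype hIJ.measurableSet hIJ.pairwise_disjoint fun p =>
      (integrableOn_const (C := v p)).congr_fun (fun x hx => (hf p x hx).symm)
        (hIJ.measurableSet p)]
  refine Finset.sum_congr rfl fun p _ => ?_
  rw [setIntegral_congr_fun (hIJ.measurableSet p) (hf p), setIntegral_const, smul_eq_mul]

end IsCopulaMeasure

section Checkerboard

variable {ι κ : Type*} [Fintype ι] [Fintype κ] {I : ι → Set ℝ} {J : κ → Set ℝ}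

noncomputable def checkerboard (I : ι → Set ℝ) (J : κ → Set ℝ) (c : ι × κ → ℝ) :
    Measure (ℝ × ℝ) :=
  ∑ p, ENNReal.ofReal (c p) • (volume[|I p.1]).prod (volume[|J p.2])

lemma checkerboard_real_prod (hI : IsMeasurablePartition I (Ico 0 1))
    (hJ : IsMeasurablePartition J (Ico 0 1)) (hI₀ : ∀ i, volume (I i) ≠ 0)
    (hJ₀ : ∀ j, volume (J j) ≠ 0) {c : ι × κ → ℝ} (hc : ∀ p, 0 ≤ c p) (q : ι × κ) :
    (checkerboard I J c).real (I q.1 ×ˢ J q.2) = c q := by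
  classical
  rw [measureReal_def, checkerboard, Measure.finsetSum_apply]
  simp only [Measure.smul_apply, Measure.prod_prod, smul_eq_mul,
    hI.cond_apply (hI₀ _) (hI.measure_ne_top measure_Ico_lt_top.ne _),
    hJ.cond_apply (hJ₀ _) (hJ.measure_ne_top measure_Ico_lt_top.ne _)]
  simp [Fintype.sum_prod_type, hc q]

lemma isCopulaMeasure_checkerboard (hI : IsMeasurablePartition I (Ico 0 1))
    (hJ : IsMeasurablePartition J (Ico 0 1)) (hI₀ : ∀ i, volume (I i) ≠ 0)
    (hJ₀ : ∀ j, volume (J j) ≠ 0) {c : ι × κ → ℝ}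
    (hc : c ∈ transportPolytope (fun i => volume.real (I i)) (fun j => volume.real (J j))) :
    IsCopulaMeasure (checkerboard I J c) := by
  have hI_top := hI.measure_ne_top (μ := volume) measure_Ico_lt_top.ne
  have hJ_top := hJ.measure_ne_top (μ := volume) measure_Ico_lt_top.ne
  have := fun i => cond_isProbabilityMeasure_of_finite (hI₀ i) (hI_top i)
  have := fun j => cond_isProbabilityMeasure_of_finite (hJ₀ j) (hJ_top j)
  have hrow i : ∑ j, ENNReal.ofReal (c (i, j)) = volume (I i) := by
    rw [← ENNReal.ofReal_sum_of_nonneg fun j _ => hc.1 _, hc.2.1 i,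
      ofReal_measureReal (hI_top i)]
  have hcol j : ∑ i, ENNReal.ofReal (c (i, j)) = volume (J j) := by
    rw [← ENNReal.ofReal_sum_of_nonneg fun i _ => hc.1 _, hc.2.2 j,
      ofReal_measureReal (hJ_top j)]
  apply isCopulaMeasure_of_map
  · rw [checkerboard,
      Measure.map_fst_sum_smul_prod _ (fun i => volume[|I i]) (fun j => volume[|J j])]
    simp_rw [hrow, measure_smul_cond (hI_top _)]
    exact hI.sum_restrict volume
  · rw [checkerboard,
      Measure.map_snd_sum_smul_prod _ (fun i => volume[|I i]) (fun j => volume[|J j])]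
    simp_rw [hcol, measure_smul_cond (hJ_top _)]
    exact hJ.sum_restrict volume

end Checkerboard

theorem exists_isCopulaMeasure_integral_eq_sSup {ι κ : Type*} [Fintype ι] [Fintype κ]
    {I : ι → Set ℝ} {J : κ → Set ℝ} (hI : IsMeasurablePartition I (Ico 0 1))
    (hJ : IsMeasurablePartition J (Ico 0 1)) (hI₀ : ∀ i, volume (I i) ≠ 0)
    (hJ₀ : ∀ j, volume (J j) ≠ 0) {f : ℝ × ℝ → ℝ} {v : ι × κ → ℝ}
    (hf : ∀ p, ∀ x ∈ I p.1 ×ˢ J p.2, f x = v p) :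
    ∃ μ : Measure (ℝ × ℝ), IsCopulaMeasure μ ∧
      ∫ x, f x ∂μ = sSup {y : ℝ | ∃ ν : Measure (ℝ × ℝ), IsCopulaMeasure ν ∧ y = ∫ x, f x ∂ν} := by
  obtain ⟨c, hc, hmax⟩ := (isCompact_transportPolytope _ _).exists_isMaxOn
    (nonempty_of_mem (isCopulaMeasure_volume_prod.cellMass_mem_transportPolytope hI hJ))
    (by fun_prop : Continuous fun c : ι × κ → ℝ => ∑ p, c p * v p).continuousOn
  have hμ := isCopulaMeasure_checkerboard hI hJ hI₀ hJ₀ hc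
  have hμc : ∫ x, f x ∂checkerboard I J c = ∑ p, c p * v p := by
    simp_rw [hμ.integral_eq_sum_s16 hI hJ hf, checkerboard_real_prod hI hJ hI₀ hJ₀ hc.1]
  have hgreatest :
      IsGreatest {y : ℝ | ∃ ν : Measure (ℝ × ℝ), IsCopulaMeasure ν ∧ y = ∫ x, f x ∂ν}
        (∫ x, f x ∂checkerboard I J c) := by
    refine ⟨⟨_, hμ, rfl⟩, ?_⟩
    rintro _ ⟨ν, hν, rfl⟩
    rw [hν.integral_eq_sum_s16 hI hJ hf, hμc]
    exact hmax (hν.cellMass_mem_transportPolytope hI hJ)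
  exact ⟨_, hμ, hgreatest.csSup_eq.symm⟩

theorem stmt_16_general (n m : ℕ) (s t : ℕ → ℝ)
    (hs0 : s 0 = 0) (hsn : s n = 1) (ht0 : t 0 = 0) (htm : t m = 1)
    (hsmono : ∀ i < n, s i < s (i + 1)) (htmono : ∀ j < m, t j < t (j + 1))
    (f : ℝ × ℝ → ℝ)
    (hconst : ∀ i < n, ∀ j < m, ∀ p ∈ Ico (s i) (s (i + 1)) ×ˢ Ico (t j) (t (j + 1)),
      ∀ q ∈ Ico (s i) (s (i + 1)) ×ˢ Ico (t j) (t (j + 1)), f p = f q) :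
    ∃ μ : Measure (ℝ × ℝ), IsCopulaMeasure μ ∧
      ∫ p, f p ∂μ =
        sSup {x : ℝ | ∃ ν : Measure (ℝ × ℝ), IsCopulaMeasure ν ∧ x = ∫ p, f p ∂ν} := by
  have hI := isMeasurablePartition_Ico hsmono
  have hJ := isMeasurablePartition_Ico htmono
  rw [hs0, hsn] at hI
  rw [ht0, htm] at hJ
  refine exists_isCopulaMeasure_integral_eq_sSup hI hJ
    (fun i => by simp [Real.volume_Ico, hsmono i i.isLt])
    (fun j => by simp [Real.volume_Ico, htmono j j.isLt])
    (v := fun p => f (s p.1, t p.2)) fun p x hx => hconst _ p.1.isLt _ p.2.isLt x hx _ ?_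
  exact ⟨⟨le_rfl, hsmono _ p.1.isLt⟩, le_rfl, htmono _ p.2.isLt⟩

theorem stmt_16 (n m : ℕ) (hn : 1 ≤ n) (hm : 1 ≤ m) (s t : ℕ → ℝ)
    (hs0 : s 0 = 0) (hsn : s n = 1) (ht0 : t 0 = 0) (htm : t m = 1)
    (hsmono : ∀ i < n, s i < s (i + 1)) (htmono : ∀ j < m, t j < t (j + 1))
    (hsrat : ∀ i ≤ n, ∃ q : ℚ, s i = (q : ℝ)) (htrat : ∀ j ≤ m, ∃ q : ℚ, t j = (q : ℝ))
    (f : ℝ × ℝ → ℝ)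
    (hconst : ∀ i < n, ∀ j < m, ∀ p ∈ Ico (s i) (s (i + 1)) ×ˢ Ico (t j) (t (j + 1)),
      ∀ q ∈ Ico (s i) (s (i + 1)) ×ˢ Ico (t j) (t (j + 1)), f p = f q) :
    ∃ μ : Measure (ℝ × ℝ), IsCopulaMeasure μ ∧
      ∫ p, f p ∂μ =
        sSup {x : ℝ | ∃ ν : Measure (ℝ × ℝ), IsCopulaMeasure ν ∧ x = ∫ p, f p ∂ν} :=
  stmt_16_general n m s t hs0 hsn ht0 htm hsmono htmono f hconst
end
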